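/- Let μ ≠ ν be two distinct {0,1}-valued probability measures on a measurable space (X, B). For y ∈ {0,1} and a probability measure φ on (X, B), let φ̄_y be the probability measure on X × {0,1} with marginal φ on X and with label Y = y almost surely. Define λ_μ = (2/3)·μ̄_1 + (1/3)·μ̄_0 and λ_ν = (2/3)·ν̄_1 + (1/3)·μ̄_0. Then: (i) for every measurable classifier h : X → {0,1}, err_{λ_μ}(h) = 2/3 − (1/3)·μ({x : h(x) = 1}) ≥ 1/3; in particular the Bayes risk of λ_μ equals 1/3 and a classifier h achieves it if and only if μ({h = 1}) = 1; (ii) the Bayes risk of λ_ν equals 0, and a classifier h achieves it if and only if μ({h = 1}) = 0 and ν({h = 1}) = 1. -/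

import Mathlib

open MeasureTheory
open scoped ENNReal

/-- The measure `φ̄_y` on `X × {0,1}`: marginal `φ` on `X` and label `y` a.s. -/
noncomputable def labelWith {X : Type*} [MeasurableSpace X] (φ : Measure X) (y : Bool) :
    Measure (X × Bool) :=
  Measure.map (fun x => (x, y)) φ

/-- The mixture `λ_φ = (2/3)·φ̄_1 + (1/3)·μ̄_0`. -/
noncomputable def lamMix {X : Type*} [MeasurableSpace X] (μ φ : Measure X) :
    Measure (X × Bool) :=
  (2 / 3 : ℝ≥0∞) • labelWith φ true + (1 / 3 : ℝ≥0∞) • labelWith μ false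

/-- The error of a classifier `h` under a measure `λ` on `X × {0,1}`. -/
def errOf {X : Type*} [MeasurableSpace X] (lam : Measure (X × Bool)) (h : X → Bool) :
    ℝ≥0∞ :=
  lam {p : X × Bool | h p.1 ≠ p.2}

/-! The error of `h` under `λ_φ` is `(2/3)·φ{h = 0} + (1/3)·μ{h = 1}`, which for `φ = μ` equals
`2/3 − (1/3)·μ{h = 1}`. Two distinct two-valued probability measures are mutually singular, and
the indicator of a set that is `μ`-null and `ν`-full classifies `λ_ν` without error. -/

namespace MeasureTheory

variable {X : Type*} [MeasurableSpace X]

lemma labelWith_apply (φ : Measure X) (y : Bool) (s : Set (X × Bool)) :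
    labelWith φ y s = φ ((·, y) ⁻¹' s) :=
  (measurableEmbedding_prod_mk_right y).map_apply φ s

lemma errOf_lamMix (μ φ : Measure X) (h : X → Bool) :
    errOf (lamMix μ φ) h = 2 / 3 * φ {x | h x = true}ᶜ + 1 / 3 * μ {x | h x = true} := by
  simp [errOf, lamMix, labelWith_apply, Set.compl_ofPred]

lemma errOf_lamMix_eq_zero_iff (μ φ : Measure X) [IsProbabilityMeasure φ] {h : X → Bool}
    (hh : Measurable h) :
    errOf (lamMix μ φ) h = 0 ↔ μ {x | h x = true} = 0 ∧ φ {x | h x = true} = 1 := by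
  rw [errOf_lamMix, ← prob_compl_eq_zero_iff (measurableSet_eq_fun hh measurable_const)]
  simp [and_comm]

lemma errOf_lamMix_self (μ : Measure X) [IsProbabilityMeasure μ] {h : X → Bool}
    (hh : Measurable h) :
    errOf (lamMix μ μ) h = 2 / 3 - 1 / 3 * μ {x | h x = true} := by
  rw [errOf_lamMix, prob_compl_eq_one_sub (measurableSet_eq_fun hh measurable_const)]
  refine ENNReal.eq_sub_of_add_eq (by finiteness) ?_
  rw [add_assoc, ← add_mul, ENNReal.div_add_div_same, one_add_one_eq_two, ← mul_add,
    tsub_add_cancel_of_le prob_le_one, mul_one]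

lemma one_third_le_errOf_lamMix_self (μ : Measure X) [IsProbabilityMeasure μ] {h : X → Bool}
    (hh : Measurable h) : 1 / 3 ≤ errOf (lamMix μ μ) h := by
  rw [errOf_lamMix_self μ hh]
  refine ENNReal.le_sub_of_add_le_right (by finiteness) ?_
  calc 1 / 3 + 1 / 3 * μ {x | h x = true} ≤ 1 / 3 + 1 / 3 * 1 := by gcongr; exact prob_le_one
    _ = 2 / 3 := by rw [mul_one, ENNReal.div_add_div_same, one_add_one_eq_two]

lemma errOf_lamMix_self_eq_one_third_iff (μ : Measure X) [IsProbabilityMeasure μ]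
    {h : X → Bool} (hh : Measurable h) :
    errOf (lamMix μ μ) h = 1 / 3 ↔ μ {x | h x = true} = 1 := by
  have two_thirds_sub : (2 : ℝ≥0∞) / 3 - 1 / 3 = 1 / 3 :=
    ENNReal.sub_eq_of_eq_add (by simp) (by rw [ENNReal.div_add_div_same, one_add_one_eq_two])
  have hle : ∀ t : ℝ≥0∞, t ≤ 1 → 1 / 3 * t ≤ 2 / 3 := fun t ht =>
    calc 1 / 3 * t ≤ 1 / 3 * 1 := by gcongr
      _ ≤ 2 / 3 := by rw [mul_one]; gcongr; norm_num
  calc errOf (lamMix μ μ) h = 1 / 3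
      ↔ 2 / 3 - 1 / 3 * μ {x | h x = true} = 2 / 3 - 1 / 3 * 1 := by
        rw [errOf_lamMix_self μ hh, mul_one, two_thirds_sub]
    _ ↔ 1 / 3 * μ {x | h x = true} = 1 / 3 * 1 :=
        ENNReal.sub_right_inj (by finiteness) (hle _ prob_le_one) (hle 1 le_rfl)
    _ ↔ μ {x | h x = true} = 1 := ENNReal.mul_right_inj (by simp) (by simp)

theorem Measure.MutuallySingular.of_twoValued {μ ν : Measure X} [IsProbabilityMeasure μ]
    [IsProbabilityMeasure ν] (hμ : ∀ A : Set X, MeasurableSet A → μ A = 0 ∨ μ A = 1)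
    (hν : ∀ A : Set X, MeasurableSet A → ν A = 0 ∨ ν A = 1) (hne : μ ≠ ν) : μ ⟂ₘ ν := by
  obtain ⟨s, hs, hμν⟩ : ∃ s, MeasurableSet s ∧ μ s ≠ ν s := by
    by_contra! h
    exact hne (Measure.ext h)
  rcases hμ s hs with hμs | hμs <;> rcases hν s hs with hνs | hνs
  · exact absurd (hμs.trans hνs.symm) hμν
  · exact ⟨s, hs, hμs, (prob_compl_eq_zero_iff hs).2 hνs⟩
  · exact ⟨sᶜ, hs.compl, (prob_compl_eq_zero_iff hs).2 hμs, by rwa [compl_compl]⟩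
  · exact absurd (hμs.trans hνs.symm) hμν

end MeasureTheory

/-- **Bayes risks of the adversarial mixtures.** For distinct two-valued probability
measures `μ ≠ ν`: (i) every classifier has `err_{λ_μ}(h) = 2/3 − (1/3)·μ{h = 1} ≥ 1/3`;
the Bayes risk of `λ_μ` is `1/3`, achieved iff `μ{h = 1} = 1`; (ii) the Bayes risk of
`λ_ν` is `0`, achieved iff `μ{h = 1} = 0` and `ν{h = 1} = 1`. -/
theorem bayes_risk_of_mixtures {X : Type*} [MeasurableSpace X]
    (μ ν : Measure X) [IsProbabilityMeasure μ] [IsProbabilityMeasure ν]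
    (hμ2 : ∀ A : Set X, MeasurableSet A → μ A = 0 ∨ μ A = 1)
    (hν2 : ∀ A : Set X, MeasurableSet A → ν A = 0 ∨ ν A = 1)
    (hne : μ ≠ ν) :
    (∀ h : X → Bool, Measurable h →
      errOf (lamMix μ μ) h = 2 / 3 - (1 / 3) * μ {x | h x = true} ∧
      1 / 3 ≤ errOf (lamMix μ μ) h) ∧
    (⨅ (h : X → Bool) (_ : Measurable h), errOf (lamMix μ μ) h) = 1 / 3 ∧
    (∀ h : X → Bool, Measurable h →
      (errOf (lamMix μ μ) h = 1 / 3 ↔ μ {x | h x = true} = 1)) ∧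
    (⨅ (h : X → Bool) (_ : Measurable h), errOf (lamMix μ ν) h) = 0 ∧
    (∀ h : X → Bool, Measurable h →
      (errOf (lamMix μ ν) h = 0 ↔ μ {x | h x = true} = 0 ∧ ν {x | h x = true} = 1)) := by
  obtain ⟨B, hB, hμB, hνBc⟩ := Measure.MutuallySingular.of_twoValued hμ2 hν2 hne
  classical
  have hBmeas : Measurable fun x => decide (x ∈ B) :=
    measurable_to_bool (by simpa [Set.preimage] using hB)
  refine ⟨fun h hh => ⟨errOf_lamMix_self μ hh, one_third_le_errOf_lamMix_self μ hh⟩, ?_,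
    fun h hh => errOf_lamMix_self_eq_one_third_iff μ hh, ?_,
    fun h hh => errOf_lamMix_eq_zero_iff μ ν hh⟩
  · refine le_antisymm ?_ (le_iInf₂ fun h hh => one_third_le_errOf_lamMix_self μ hh)
    exact iInf₂_le_of_le (fun _ => true) measurable_const
      ((errOf_lamMix_self_eq_one_third_iff μ measurable_const).2 (by simp)).le
  · have hνB : ν B = 1 := (prob_compl_eq_zero_iff hB).1 hνBc
    exact nonpos_iff_eq_zero.1 (iInf₂_le_of_le _ hBmeas
      ((errOf_lamMix_eq_zero_iff μ ν hBmeas).2 (by simpa using ⟨hμB, hνB⟩)).le)
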